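/- If f is m_f-strongly convex with L_f-Lipschitz gradient and e := ∇f(a) − ∇f(b) − m_f(a − b) satisfies ⟨e, a − b⟩ = 0, then e = 0, i.e., ∇f(a) − ∇f(b) = m_f(a − b). -/

import Mathlib

/-!
Strong convexity says that `h := f - (m_f/2)‖·‖²` is convex; its gradient `g := f' - m_f • id` is
Lipschitz. For a convex function with `L`-Lipschitz gradient, the first-order lower bound at `x`,
evaluated at the gradient step `y - L⁻¹ (g y - g x)`, and the descent-lemma upper bound at `y`
combine to `h x + ⟪g x, y - x⟫ + ‖g y - g x‖² / (2L) ≤ h y`; adding this to its mirror image gives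
cocoercivity `‖g x - g y‖² ≤ L ⟪g x - g y, x - y⟫`. Since `e = g a - g b`, orthogonality forces
`‖e‖² ≤ 0`.
-/

open RealInnerProductSpace Set

section ConvexLipschitzGradient

variable {E : Type*} [NormedAddCommGroup E] [InnerProductSpace ℝ E] [CompleteSpace E]

theorem hasGradientAt_norm_sq (x : E) : HasGradientAt (fun x : E => ‖x‖ ^ 2) ((2 : ℝ) • x) x := by
  rw [hasGradientAt_iff_hasFDerivAt]
  refine (hasStrictFDerivAt_norm_sq x).hasFDerivAt.congr_fderiv ?_
  ext v
  simp [InnerProductSpace.toDual_apply_apply]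

theorem HasGradientAt.sub_const_mul_norm_sq {f : E → ℝ} {f' x : E} (hf : HasGradientAt f f' x)
    (m : ℝ) : HasGradientAt (fun x => f x - m / 2 * ‖x‖ ^ 2) (f' - m • x) x := by
  have hq := (hasGradientAt_norm_sq x).hasFDerivAt.const_mul (m / 2)
  rw [hasGradientAt_iff_hasFDerivAt] at hf ⊢
  refine (hf.sub hq).congr_fderiv ?_
  ext v
  simp only [map_smul, sub_apply, InnerProductSpace.toDual_apply_apply, smul_apply, smul_eq_mul,
    map_sub, sub_right_inj]
  ring

theorem HasGradientAt.hasDerivAt_comp_add_smul {h : E → ℝ} {g x v : E} {t : ℝ}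
    (hh : HasGradientAt h g (x + t • v)) :
    HasDerivAt (fun s : ℝ => h (x + s • v)) ⟪g, v⟫ t := by
  have hline : HasDerivAt (fun s : ℝ => x + s • v) v t := by
    simpa using ((hasDerivAt_id t).smul_const v).const_add x
  have hcomp := hh.hasFDerivAt.comp_hasDerivAt t hline
  simp only [InnerProductSpace.toDual_apply_apply] at hcomp
  exact hcomp

theorem ConvexOn.add_inner_sub_le_of_hasGradientAt {h : E → ℝ} {g x : E}
    (hconv : ConvexOn ℝ univ h) (hx : HasGradientAt h g x) (y : E) :
    h x + ⟪g, y - x⟫ ≤ h y := by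
  have hline : ConvexOn ℝ univ (fun t : ℝ => h (x + t • (y - x))) := by
    simpa [Function.comp_def, AffineMap.lineMap_apply, add_comm] using
      hconv.comp_affineMap (AffineMap.lineMap x y)
  have hderiv : HasDerivAt (fun t : ℝ => h (x + t • (y - x))) ⟪g, y - x⟫ 0 :=
    HasGradientAt.hasDerivAt_comp_add_smul (by simpa using hx)
  have hslope := hline.le_slope_of_hasDerivAt (mem_univ 0) (mem_univ 1) one_pos hderiv
  simp only [slope_def_field, one_smul, add_sub_cancel, zero_smul, add_zero, sub_zero,
    div_one] at hslope
  linarith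

theorem le_add_inner_sub_add_sq_norm_of_lipschitz {h : E → ℝ} {g : E → E} {L : ℝ}
    (hg : ∀ x, HasGradientAt h (g x) x) (hlip : ∀ a b, ‖g a - g b‖ ≤ L * ‖a - b‖) (x y : E) :
    h y ≤ h x + ⟪g x, y - x⟫ + L / 2 * ‖y - x‖ ^ 2 := by
  set v := y - x
  set φ : ℝ → ℝ := fun t => h (x + t • v) - t * ⟪g x, v⟫ - L / 2 * t ^ 2 * ‖v‖ ^ 2
  have hφ : ∀ t, HasDerivAt φ (⟪g (x + t • v) - g x, v⟫ - L * t * ‖v‖ ^ 2) t := by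
    intro t
    refine ((((hg (x + t • v)).hasDerivAt_comp_add_smul).sub
      ((hasDerivAt_id t).mul_const ⟪g x, v⟫)).sub
      (((hasDerivAt_pow 2 t).const_mul (L / 2)).mul_const (‖v‖ ^ 2))).congr_deriv ?_
    rw [inner_sub_left]
    push_cast
    ring
  have hslope : ∀ t, 0 ≤ t → ⟪g (x + t • v) - g x, v⟫ ≤ L * t * ‖v‖ ^ 2 := fun t ht =>
    calc ⟪g (x + t • v) - g x, v⟫ ≤ ‖g (x + t • v) - g x‖ * ‖v‖ := real_inner_le_norm _ _
      _ ≤ L * ‖t • v‖ * ‖v‖ := by gcongr; simpa using hlip (x + t • v) x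
      _ = L * t * ‖v‖ ^ 2 := by rw [norm_smul, Real.norm_of_nonneg ht]; ring
  have hanti : AntitoneOn φ (Ici 0) :=
    antitoneOn_of_hasDerivWithinAt_nonpos (convex_Ici 0)
      (fun t _ => (hφ t).continuousAt.continuousWithinAt) (fun t _ => (hφ t).hasDerivWithinAt)
      (fun t ht => by rw [interior_Ici] at ht; linarith [hslope t ht.le])
  have hφ01 := hanti self_mem_Ici (show (0 : ℝ) ≤ 1 from zero_le_one) zero_le_one
  simp only [φ, v, one_smul, add_sub_cancel, one_mul, one_pow, mul_one, zero_smul, add_zero,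
    zero_mul, sub_zero, ne_eq, OfNat.ofNat_ne_zero, not_false_eq_true, zero_pow, mul_zero] at hφ01
  linarith

theorem ConvexOn.add_inner_sub_add_sq_norm_div_le {h : E → ℝ} {g : E → E} {L : ℝ} (hL : 0 < L)
    (hconv : ConvexOn ℝ univ h) (hg : ∀ x, HasGradientAt h (g x) x)
    (hlip : ∀ a b, ‖g a - g b‖ ≤ L * ‖a - b‖) (x y : E) :
    h x + ⟪g x, y - x⟫ + ‖g y - g x‖ ^ 2 / (2 * L) ≤ h y := by
  set d := g y - g x
  set z := y - L⁻¹ • d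
  have hlow := hconv.add_inner_sub_le_of_hasGradientAt (hg x) z
  have hup := le_add_inner_sub_add_sq_norm_of_lipschitz hg hlip y z
  have hzx : z - x = (y - x) - L⁻¹ • d := by simp only [z]; abel
  have hzy : z - y = -(L⁻¹ • d) := by simp only [z]; abel
  rw [hzx, inner_sub_right, real_inner_smul_right] at hlow
  rw [hzy, inner_neg_right, real_inner_smul_right, norm_neg, norm_smul,
    Real.norm_of_nonneg (inv_nonneg.mpr hL.le)] at hup
  have hd : ⟪g y, d⟫ - ⟪g x, d⟫ = ‖d‖ ^ 2 := by
    rw [← inner_sub_left, real_inner_self_eq_norm_sq]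
  have hquad : L / 2 * (L⁻¹ * ‖d‖) ^ 2 = ‖d‖ ^ 2 / (2 * L) := by
    field_simp
  have hdiv : L⁻¹ * ‖d‖ ^ 2 = 2 * (‖d‖ ^ 2 / (2 * L)) := by
    field_simp
  linear_combination hlow + hup - L⁻¹ * hd + hquad - hdiv

theorem ConvexOn.sq_norm_sub_le_mul_inner_of_lipschitz {h : E → ℝ} {g : E → E} {L : ℝ}
    (hL : 0 < L) (hconv : ConvexOn ℝ univ h) (hg : ∀ x, HasGradientAt h (g x) x)
    (hlip : ∀ a b, ‖g a - g b‖ ≤ L * ‖a - b‖) (x y : E) :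
    ‖g x - g y‖ ^ 2 ≤ L * ⟪g x - g y, x - y⟫ := by
  have hxy := hconv.add_inner_sub_add_sq_norm_div_le hL hg hlip x y
  have hyx := hconv.add_inner_sub_add_sq_norm_div_le hL hg hlip y x
  rw [norm_sub_rev] at hxy
  have hinner : ⟪g x - g y, x - y⟫ = -⟪g x, y - x⟫ - ⟪g y, x - y⟫ := by
    rw [inner_sub_left, ← inner_neg_right, neg_sub]
  have hsum : ‖g x - g y‖ ^ 2 / L ≤ ⟪g x - g y, x - y⟫ := by
    have hhalves :
        ‖g x - g y‖ ^ 2 / (2 * L) + ‖g x - g y‖ ^ 2 / (2 * L) = ‖g x - g y‖ ^ 2 / L := by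
      field_simp
      ring
    linarith
  rwa [div_le_iff₀' hL] at hsum

end ConvexLipschitzGradient

/-- If `f` is `m_f`-strongly convex with `L_f`-Lipschitz gradient `f'` and
`e := f' a − f' b − m_f (a − b)` satisfies `⟨e, a − b⟩ = 0`, then `e = 0`. -/
theorem orthogonal_implies_zero {n : ℕ} (mf Lf : ℝ) (hmf : 0 < mf) (hLf : mf ≤ Lf)
    (f : EuclideanSpace ℝ (Fin n) → ℝ)
    (f' : EuclideanSpace ℝ (Fin n) → EuclideanSpace ℝ (Fin n))
    (hf' : ∀ x, HasGradientAt f (f' x) x)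
    (hsc : ConvexOn ℝ Set.univ (fun x => f x - mf / 2 * ‖x‖ ^ 2))
    (hlip : ∀ a b, ‖f' a - f' b‖ ≤ Lf * ‖a - b‖)
    (a b : EuclideanSpace ℝ (Fin n))
    (horth : ⟪f' a - f' b - mf • (a - b), a - b⟫ = 0) :
    f' a - f' b = mf • (a - b) := by
  have hdiff : ∀ x y : EuclideanSpace ℝ (Fin n),
      (f' x - mf • x) - (f' y - mf • y) = f' x - f' y - mf • (x - y) := by
    intro x y
    rw [smul_sub]
    abel
  have hglip : ∀ x y, ‖(f' x - mf • x) - (f' y - mf • y)‖ ≤ (Lf + mf) * ‖x - y‖ := by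
    intro x y
    calc ‖(f' x - mf • x) - (f' y - mf • y)‖ ≤ ‖f' x - f' y‖ + ‖mf • (x - y)‖ := by
          rw [hdiff]; exact norm_sub_le _ _
      _ ≤ Lf * ‖x - y‖ + mf * ‖x - y‖ := by
          rw [norm_smul, Real.norm_of_nonneg hmf.le]; gcongr; exact hlip x y
      _ = (Lf + mf) * ‖x - y‖ := by ring
  have hcoco := hsc.sq_norm_sub_le_mul_inner_of_lipschitz (by linarith)
    (fun x => (hf' x).sub_const_mul_norm_sq mf) hglip a b
  rw [hdiff, horth, mul_zero] at hcoco
  exact sub_eq_zero.mp (by simpa using hcoco)
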